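/- arXiv:2207.03874 — 2 statements merged into one kernel-verified Lean document; each statement's English description precedes it below -/
import Mathlib

section
/- Consider the finite-volume Ising model on the path graph with vertex set {0, 1, …, N} and edges {i, i+1} for 0 ≤ i < N (the one-dimensional Ising chain with free boundary conditions). Then for every inverse temperature β ∈ ℝ and all indices 0 ≤ i ≤ j ≤ N, the two-point correlation function equals ⟨σ(i)·σ(j)⟩_β = (tanh β)^{j−i}. In particular, for every β ≥ 0 the correlations decay exponentially in the distance j − i, so there is no long-range order in dimension one at any positive temperature. -/
/-! Pass to the bond variables `τₖ = σ(k)σ(k+1)`: together with `σ(0)` they determine `σ`, the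
Gibbs weight of the free chain is `∏ₖ exp(β τₖ)`, and `σ(i)σ(j) = ∏_{i ≤ k < j} τₖ` telescopes.
So under the Gibbs measure the bonds are independent with mean `tanh β` each. -/

open Finset

noncomputable section

/-- The spin value ±1 associated to a boolean. -/
def spin (b : Bool) : ℝ := if b then 1 else -1

variable {V : Type} [Fintype V] [DecidableEq V]

/-- The product of the spins at the two endpoints of an (unordered) edge. -/
def edgeSpin (σ : V → Bool) : Sym2 V → ℝ :=
  Sym2.lift ⟨fun v w => spin (σ v) * spin (σ w), fun v w => by ring⟩

/-- The Ising energy: Energy(σ) = −∑_{{v,v'} ∈ E(G)} σ(v)·σ(v'). -/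
def energy (G : SimpleGraph V) [DecidableRel G.Adj] (σ : V → Bool) : ℝ :=
  - ∑ e ∈ G.edgeFinset, edgeSpin σ e

/-- The partition function Z(β). -/
def Z (G : SimpleGraph V) [DecidableRel G.Adj] (β : ℝ) : ℝ :=
  ∑ σ : V → Bool, Real.exp (-β * energy G σ)

/-- The Gibbs probability P_β(σ) = exp(−β·Energy(σ))/Z(β). -/
def gibbsProb (G : SimpleGraph V) [DecidableRel G.Adj] (β : ℝ) (σ : V → Bool) : ℝ :=
  Real.exp (-β * energy G σ) / Z G β

/-- The Gibbs expectation ⟨f⟩_β. -/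
def gibbsExp (G : SimpleGraph V) [DecidableRel G.Adj] (β : ℝ) (f : (V → Bool) → ℝ) : ℝ :=
  ∑ σ : V → Bool, gibbsProb G β σ * f σ


/-- The path graph on vertices {0, 1, …, N}, with edges {i, i+1}. -/
def pathG (N : ℕ) : SimpleGraph (Fin (N + 1)) :=
  SimpleGraph.fromRel (fun i j => (i : ℕ) + 1 = (j : ℕ))

instance (N : ℕ) : DecidableRel (pathG N).Adj := fun a b =>
  decidable_of_iff (a ≠ b ∧ ((a : ℕ) + 1 = (b : ℕ) ∨ (b : ℕ) + 1 = (a : ℕ)))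
    (by rw [pathG, SimpleGraph.fromRel_adj])

lemma spin_mul_self (b : Bool) : spin b * spin b = 1 := by
  cases b <;> norm_num [spin]

lemma spin_beq (a b : Bool) : spin (a == b) = spin a * spin b := by
  cases a <;> cases b <;> norm_num [spin]

lemma sum_bool_exp_mul_spin (β : ℝ) :
    ∑ b : Bool, Real.exp (β * spin b) * spin b = 2 * Real.sinh β := by
  simp [spin, Real.sinh_eq]
  ring

lemma sum_bool_exp (β : ℝ) : ∑ b : Bool, Real.exp (β * spin b) = 2 * Real.cosh β := by
  simp [spin, Real.cosh_eq]
  ring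

lemma sum_bool_comp_beq {M : Type*} [AddCommMonoid M] (g : Bool → M) (a : Bool) :
    ∑ s : Bool, g (s == a) = ∑ b : Bool, g b := by
  cases a <;> simp [add_comm]

-- `bond σ k` is `true` iff the spins at `k` and `k + 1` agree, so `spin (bond σ k) = σ(k)σ(k+1)`.
def bond {N : ℕ} (σ : Fin (N + 1) → Bool) (k : Fin N) : Bool := σ k.castSucc == σ k.succ

lemma sum_prod_bond {M : Type*} [CommSemiring M] :
    ∀ {N : ℕ} (g : Fin N → Bool → M),
      ∑ σ : Fin (N + 1) → Bool, ∏ k, g k (bond σ k) = 2 * ∏ k, ∑ b, g k b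
  | 0, g => by simp
  | N + 1, g => by
    rw [← Fintype.sum_equiv (Fin.consEquiv fun _ => Bool) _ _ fun _ => rfl,
      Fintype.sum_prod_type, sum_comm]
    have ih := sum_prod_bond fun k => g k.succ
    simp only [bond, Fin.consEquiv_apply, Fin.prod_univ_succ, Fin.castSucc_zero, Fin.cons_zero,
      ← Fin.succ_castSucc, Fin.cons_succ] at ih ⊢
    simp only [← sum_mul, sum_bool_comp_beq, ← mul_sum, ih]
    ring

lemma pathG_adj {N : ℕ} {a b : Fin (N + 1)} :
    (pathG N).Adj a b ↔ (a : ℕ) + 1 = b ∨ (b : ℕ) + 1 = a := by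
  rw [pathG, SimpleGraph.fromRel_adj, and_iff_right_iff_imp]
  rintro (h | h) rfl <;> omega

lemma castSucc_succ_injective (N : ℕ) :
    Function.Injective fun k : Fin N => s(k.castSucc, k.succ) := by
  intro k l h
  rcases Sym2.eq_iff.mp h with ⟨h, -⟩ | ⟨h, h'⟩
  · exact Fin.castSucc_injective N h
  · rw [Fin.ext_iff] at h h'
    simp only [Fin.val_castSucc, Fin.val_succ] at h h'
    omega

lemma pathG_edgeFinset (N : ℕ) :
    (pathG N).edgeFinset = univ.map ⟨_, castSucc_succ_injective N⟩ := by
  ext e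
  induction e using Sym2.ind with
  | _ a b =>
  simp only [SimpleGraph.mem_edgeFinset, SimpleGraph.mem_edgeSet, pathG_adj, mem_map, mem_univ,
    true_and, Function.Embedding.coeFn_mk, Sym2.eq_iff, Fin.ext_iff, Fin.val_castSucc, Fin.val_succ]
  constructor
  · rintro (h | h)
    · exact ⟨⟨a, by omega⟩, Or.inl ⟨rfl, h⟩⟩
    · exact ⟨⟨b, by omega⟩, Or.inr ⟨rfl, h⟩⟩
  · rintro ⟨k, ⟨h, h'⟩ | ⟨h, h'⟩⟩ <;> omega

lemma energy_pathG {N : ℕ} (σ : Fin (N + 1) → Bool) :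
    energy (pathG N) σ = -∑ k, spin (bond σ k) := by
  simp [energy, pathG_edgeFinset, edgeSpin, bond, spin_beq]

lemma Ico_val_subset_range {N : ℕ} (i j : Fin (N + 1)) : Ico (i : ℕ) j ⊆ range N := by
  intro k hk
  have := j.isLt
  simp only [mem_Ico, mem_range] at hk ⊢
  omega

lemma spin_mul_spin_eq_prod_Ico (f : ℕ → Bool) {i j : ℕ} (hij : i ≤ j) :
    spin (f i) * spin (f j) = ∏ k ∈ Ico i j, spin (f k == f (k + 1)) := by
  induction j, hij using Nat.le_induction with
  | base => rw [spin_mul_self, Ico_self, prod_empty]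
  | succ j hij ih =>
    rw [prod_Ico_succ_top hij, ← ih, spin_beq]
    linear_combination -spin (f i) * spin (f (j + 1)) * spin_mul_self (f j)

lemma spin_mul_spin_eq_prod_bond {N : ℕ} (σ : Fin (N + 1) → Bool) {i j : Fin (N + 1)}
    (hij : i ≤ j) :
    spin (σ i) * spin (σ j) =
      ∏ k : Fin N, if (k : ℕ) ∈ Ico (i : ℕ) j then spin (bond σ k) else 1 := by
  set f : ℕ → Bool := fun n => σ (Fin.clamp n N)
  have hf (m : Fin (N + 1)) : f m = σ m := by
    simp only [f]
    congr
    ext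
    simp [Fin.coe_clamp, Nat.le_of_lt_succ m.isLt]
  have hbond (k : Fin N) : bond σ k = (f k == f (k + 1)) := by
    rw [bond, ← hf k.castSucc, ← hf k.succ]; rfl
  simp only [hbond]
  rw [Fin.prod_univ_eq_prod_range
      (fun k => if k ∈ Ico (i : ℕ) j then spin (f k == f (k + 1)) else 1), prod_ite_mem,
    inter_eq_right.mpr (Ico_val_subset_range i j), ← spin_mul_spin_eq_prod_Ico f hij, hf, hf]

lemma sum_bool_exp_mul_ite (β : ℝ) (c : Prop) [Decidable c] :
    ∑ b : Bool, Real.exp (β * spin b) * (if c then spin b else 1) =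
      2 * Real.cosh β * if c then Real.tanh β else 1 := by
  have := (Real.cosh_pos β).ne'
  split_ifs
  · rw [sum_bool_exp_mul_spin, Real.tanh_eq_sinh_div_cosh]
    field_simp
  · simp only [mul_one, sum_bool_exp]

lemma sum_exp_mul_prod_bond (N : ℕ) (β : ℝ) (T : Finset ℕ) :
    ∑ σ : Fin (N + 1) → Bool, Real.exp (-β * energy (pathG N) σ) *
        ∏ k : Fin N, (if (k : ℕ) ∈ T then spin (bond σ k) else 1) =
      2 * (2 * Real.cosh β) ^ N * Real.tanh β ^ #(range N ∩ T) := by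
  simp only [energy_pathG, neg_mul_neg, mul_sum, Real.exp_sum, ← prod_mul_distrib]
  rw [sum_prod_bond fun k b => Real.exp (β * spin b) * (if (k : ℕ) ∈ T then spin b else 1)]
  simp only [sum_bool_exp_mul_ite, prod_mul_distrib, prod_const, card_univ, Fintype.card_fin]
  rw [Fin.prod_univ_eq_prod_range (fun k => if k ∈ T then Real.tanh β else 1), prod_ite_mem,
    prod_const]
  ring

lemma Z_pathG (N : ℕ) (β : ℝ) : Z (pathG N) β = 2 * (2 * Real.cosh β) ^ N := by
  simpa [Z] using sum_exp_mul_prod_bond N β ∅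

lemma gibbsExp_eq_sum_div_Z {V : Type} [Fintype V] [DecidableEq V] (G : SimpleGraph V)
    [DecidableRel G.Adj] (β : ℝ) (f : (V → Bool) → ℝ) :
    gibbsExp G β f = (∑ σ, Real.exp (-β * energy G σ) * f σ) / Z G β := by
  simp only [gibbsExp, gibbsProb, div_mul_eq_mul_div, sum_div]

lemma sum_exp_mul_two_point_pathG {N : ℕ} (β : ℝ) {i j : Fin (N + 1)} (hij : i ≤ j) :
    ∑ σ : Fin (N + 1) → Bool, Real.exp (-β * energy (pathG N) σ) * (spin (σ i) * spin (σ j)) =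
      Z (pathG N) β * Real.tanh β ^ ((j : ℕ) - i) := by
  simp only [spin_mul_spin_eq_prod_bond _ hij]
  rw [sum_exp_mul_prod_bond, Z_pathG, inter_eq_right.mpr (Ico_val_subset_range i j), Nat.card_Ico]

lemma Real.tanh_nonneg {x : ℝ} (hx : 0 ≤ x) : 0 ≤ Real.tanh x := by
  rw [Real.tanh_eq_sinh_div_cosh]
  exact div_nonneg (Real.sinh_nonneg_iff.mpr hx) (Real.cosh_pos x).le

/-- The two-point function of the one-dimensional Ising chain with free boundary
conditions: ⟨σ(i)σ(j)⟩_β = (tanh β)^{j−i}.  In particular, for β ≥ 0 the correlations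
are bounded by (tanh β)^{j−i} with tanh β < 1, i.e. they decay exponentially in the
distance: there is no long-range order in dimension one at any positive temperature. -/
theorem ising_chain_two_point (N : ℕ) (β : ℝ) (i j : Fin (N + 1)) (hij : i ≤ j) :
    gibbsExp (pathG N) β (fun σ => spin (σ i) * spin (σ j)) =
      Real.tanh β ^ ((j : ℕ) - (i : ℕ)) ∧
    (0 ≤ β →
      |gibbsExp (pathG N) β (fun σ => spin (σ i) * spin (σ j))| ≤
        Real.tanh β ^ ((j : ℕ) - (i : ℕ)) ∧ Real.tanh β < 1) := by
  have hZ : Z (pathG N) β ≠ 0 := by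
    rw [Z_pathG]
    have := Real.cosh_pos β
    positivity
  have htwo_point : gibbsExp (pathG N) β (fun σ => spin (σ i) * spin (σ j)) =
      Real.tanh β ^ ((j : ℕ) - (i : ℕ)) := by
    rw [gibbsExp_eq_sum_div_Z, sum_exp_mul_two_point_pathG β hij, mul_div_cancel_left₀ _ hZ]
  refine ⟨htwo_point, fun hβ => ⟨?_, Real.tanh_lt_one β⟩⟩
  rw [htwo_point, abs_of_nonneg (pow_nonneg (Real.tanh_nonneg hβ) _)]
end
end

section
/- Let X₁ and X₂ be finite nonempty types with energy functions E₁ : X₁ → ℝ and E₂ : X₂ → ℝ, and for an inverse temperature β let P_{β,E}(x) = exp(−β·E(x))/∑_y exp(−β·E(y)) denote the Boltzmann distribution. Define the combined energy E on X₁ × X₂ by E(x₁, x₂) = E₁(x₁) + E₂(x₂). Then: (i) for every β, the product distribution P_{β,E₁} ⊗ P_{β,E₂} equals P_{β,E}; and (ii) if neither E₁ nor E₂ is a constant function, then for inverse temperatures β₁, β₂, β, the product distribution P_{β₁,E₁} ⊗ P_{β₂,E₂} equals P_{β,E} if and only if β₁ = β₂ = β. -/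
noncomputable section

/-- The Boltzmann (Gibbs) distribution on a finite type at inverse temperature β. -/
def boltzmann {X : Type} [Fintype X] (E : X → ℝ) (β : ℝ) (x : X) : ℝ :=
  Real.exp (-β * E x) / ∑ y : X, Real.exp (-β * E y)

lemma boltzmann_sum_pos {X : Type} [Fintype X] [Nonempty X] (E : X → ℝ) (β : ℝ) :
    0 < ∑ y : X, Real.exp (-β * E y) :=
  Finset.sum_pos (fun _ _ => Real.exp_pos _) Finset.univ_nonempty

lemma log_boltzmann {X : Type} [Fintype X] [Nonempty X] (E : X → ℝ) (β : ℝ) (x : X) :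
    Real.log (boltzmann E β x) = -β * E x - Real.log (∑ y : X, Real.exp (-β * E y)) := by
  rw [boltzmann, Real.log_div (Real.exp_ne_zero _) (boltzmann_sum_pos E β).ne', Real.log_exp]

lemma boltzmann_prod {X₁ X₂ : Type} [Fintype X₁] [Fintype X₂] [Nonempty X₁] [Nonempty X₂]
    (E₁ : X₁ → ℝ) (E₂ : X₂ → ℝ) (β : ℝ) (x : X₁ × X₂) :
    boltzmann E₁ β x.1 * boltzmann E₂ β x.2 =
      boltzmann (fun p : X₁ × X₂ => E₁ p.1 + E₂ p.2) β x := by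
  unfold boltzmann
  have hS : (∑ p : X₁ × X₂, Real.exp (-β * (E₁ p.1 + E₂ p.2))) =
      (∑ y : X₁, Real.exp (-β * E₁ y)) * (∑ y : X₂, Real.exp (-β * E₂ y)) := by
    rw [Finset.sum_mul_sum, Fintype.sum_prod_type]
    simp [mul_add, Real.exp_add]
  rw [hS, div_mul_div_comm, mul_add, Real.exp_add]

/-- Two non-interacting systems form a joint Boltzmann equilibrium exactly when their
inverse temperatures agree (footnote 8 of the paper): (i) the product of the Boltzmann
distributions at a common β is the Boltzmann distribution of the combined energy
E(x₁,x₂) = E₁(x₁) + E₂(x₂); (ii) if neither energy is constant, the product of the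
Boltzmann distributions at β₁, β₂ equals the combined one at β iff β₁ = β₂ = β. -/
theorem boltzmann_product_iff_equal_temperature
    {X₁ X₂ : Type} [Fintype X₁] [Fintype X₂] [Nonempty X₁] [Nonempty X₂]
    (E₁ : X₁ → ℝ) (E₂ : X₂ → ℝ) :
    (∀ β : ℝ, ∀ x : X₁ × X₂,
      boltzmann E₁ β x.1 * boltzmann E₂ β x.2 =
        boltzmann (fun p : X₁ × X₂ => E₁ p.1 + E₂ p.2) β x) ∧
    ((¬ ∃ c : ℝ, ∀ x, E₁ x = c) → (¬ ∃ c : ℝ, ∀ x, E₂ x = c) →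
      ∀ β₁ β₂ β : ℝ,
        ((∀ x : X₁ × X₂,
            boltzmann E₁ β₁ x.1 * boltzmann E₂ β₂ x.2 =
              boltzmann (fun p : X₁ × X₂ => E₁ p.1 + E₂ p.2) β x) ↔
          (β₁ = β ∧ β₂ = β))) := by
  refine ⟨boltzmann_prod E₁ E₂, fun h1 h2 β₁ β₂ β => ⟨fun h => ?_, ?_⟩⟩
  · -- take logs
    have hpos : ∀ (x : X₁ × X₂), 0 < boltzmann E₁ β₁ x.1 * boltzmann E₂ β₂ x.2 := fun x =>
      mul_pos (div_pos (Real.exp_pos _) (boltzmann_sum_pos E₁ β₁))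
        (div_pos (Real.exp_pos _) (boltzmann_sum_pos E₂ β₂))
    have hlog : ∀ (x : X₁ × X₂),
        (-β₁ * E₁ x.1 - Real.log (∑ y : X₁, Real.exp (-β₁ * E₁ y))) +
        (-β₂ * E₂ x.2 - Real.log (∑ y : X₂, Real.exp (-β₂ * E₂ y))) =
        -β * (E₁ x.1 + E₂ x.2) -
          Real.log (∑ p : X₁ × X₂, Real.exp (-β * (E₁ p.1 + E₂ p.2))) := by
      intro x
      have := congrArg Real.log (h x)
      have hb1 : boltzmann E₁ β₁ x.1 ≠ 0 :=
        (div_pos (Real.exp_pos _) (boltzmann_sum_pos E₁ β₁)).ne'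
      have hb2 : boltzmann E₂ β₂ x.2 ≠ 0 :=
        (div_pos (Real.exp_pos _) (boltzmann_sum_pos E₂ β₂)).ne'
      rwa [Real.log_mul hb1 hb2, log_boltzmann, log_boltzmann, log_boltzmann] at this
    push_neg at h1 h2
    obtain ⟨a, ha⟩ := h1 (E₁ (Classical.arbitrary X₁))
    obtain ⟨b, hb⟩ := h2 (E₂ (Classical.arbitrary X₂))
    constructor
    · have e1 := hlog (a, Classical.arbitrary X₂)
      have e2 := hlog (Classical.arbitrary X₁, Classical.arbitrary X₂)
      have key : β₁ * (E₁ a - E₁ (Classical.arbitrary X₁)) =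
          β * (E₁ a - E₁ (Classical.arbitrary X₁)) := by
        simp only at e1 e2; nlinarith [e1, e2]
      have : E₁ a - E₁ (Classical.arbitrary X₁) ≠ 0 := sub_ne_zero.mpr ha
      exact mul_right_cancel₀ this key
    · have e1 := hlog (Classical.arbitrary X₁, b)
      have e2 := hlog (Classical.arbitrary X₁, Classical.arbitrary X₂)
      have key : β₂ * (E₂ b - E₂ (Classical.arbitrary X₂)) =
          β * (E₂ b - E₂ (Classical.arbitrary X₂)) := by
        simp only at e1 e2; nlinarith [e1, e2]
      have : E₂ b - E₂ (Classical.arbitrary X₂) ≠ 0 := sub_ne_zero.mpr hb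
      exact mul_right_cancel₀ this key
  · rintro ⟨rfl, rfl⟩ x
    exact boltzmann_prod E₁ E₂ _ x
end
end
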